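/- Let G be a simple graph, s ≥ 1, and let L_s be the constant s-list assignment giving every vertex the list {1,2,…,s}. Let H be an induced subgraph of G on λ_{L_s}(G) vertices all of which are properly colored in a maximum partial coloring from L_s, chosen so that no uncolored vertex can additionally be colored. If λ_{L_s}(G) < |V(G)|, then χ(H) = s. -/

import Mathlib

/-! A proper coloring of `S` from `{1, …, s}` is an `s`-coloring of `H = G[S]`. If `H` had an
`n`-coloring with `n < s`, recoloring `S` with it would leave a color free for an uncolored
vertex `v`, so `S ∪ {v}` would be colorable from `L_s`, contradicting `|S| = λ_{L_s}(G)`. -/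

open SimpleGraph

/-- `c` properly colors each vertex of `S` from its list `L`. -/
def IsPartialListColoring {V : Type*} (G : SimpleGraph V) (L : V → Finset ℕ)
    (S : Set V) (c : V → ℕ) : Prop :=
  (∀ v ∈ S, c v ∈ L v) ∧ ∀ u ∈ S, ∀ v ∈ S, G.Adj u v → c u ≠ c v

/-- `λ_L(G)`: the maximum number of vertices properly colorable from the lists of `L`. -/
noncomputable def lamL {V : Type*} (G : SimpleGraph V) (L : V → Finset ℕ) : ℕ :=
  sSup {k | ∃ (S : Finset V) (c : V → ℕ), S.card = k ∧ IsPartialListColoring G L S c}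

/-- `λ_t(G)`: the minimum of `λ_L(G)` over all `t`-list assignments `L`. -/
noncomputable def lam {V : Type*} (G : SimpleGraph V) (t : ℕ) : ℕ :=
  sInf {m | ∃ L : V → Finset ℕ, (∀ v, (L v).card = t) ∧ lamL G L = m}

/-- `G` admits a full proper coloring from the lists of `L`. -/
def ListColorable {V : Type*} (G : SimpleGraph V) (L : V → Finset ℕ) : Prop :=
  ∃ c : V → ℕ, (∀ v, c v ∈ L v) ∧ ∀ u v, G.Adj u v → c u ≠ c v

/-- The list chromatic number of `G`. -/
noncomputable def listChromaticNumber {V : Type*} (G : SimpleGraph V) : ℕ :=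
  sInf {k | ∀ L : V → Finset ℕ, (∀ v, (L v).card = k) → ListColorable G L}

namespace SimpleGraph

variable {V : Type*} {G : SimpleGraph V}

theorem Colorable.induce_insert {S : Set V} {n : ℕ} (v : V) (h : (G.induce S).Colorable n) :
    (G.induce (insert v S)).Colorable (n + 1) := by
  classical
  obtain ⟨C⟩ := h
  let C' : (G.induce (insert v S)).Coloring (Option (Fin n)) :=
    Coloring.mk (fun w => if hw : w.1 ∈ S then some (C ⟨w, hw⟩) else none) <| by
      rintro ⟨u, hu⟩ ⟨w, hw⟩ huw
      by_cases huS : u ∈ S <;> by_cases hwS : w ∈ S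
      · simpa [huS, hwS] using C.valid (show (G.induce S).Adj ⟨u, huS⟩ ⟨w, hwS⟩ from huw)
      · simp [huS, hwS]
      · simp [huS, hwS]
      · obtain rfl := (Set.mem_insert_iff.mp hu).resolve_right huS
        obtain rfl := (Set.mem_insert_iff.mp hw).resolve_right hwS
        exact absurd huw (G.loopless.irrefl _)
  simpa using C'.colorable

end SimpleGraph

section PartialListColoring

variable {V : Type*} {G : SimpleGraph V}

theorem IsPartialListColoring.colorable_induce {A : Finset ℕ} {S : Set V} {c : V → ℕ}
    (hc : IsPartialListColoring G (fun _ => A) S c) : (G.induce S).Colorable A.card := by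
  let C : (G.induce S).Coloring A :=
    Coloring.mk (fun v => ⟨c v, hc.1 v v.2⟩) fun {u w} huw h =>
      hc.2 u u.2 w w.2 huw (congrArg Subtype.val h)
  simpa using C.colorable

theorem exists_isPartialListColoring_Icc_iff_colorable (S : Set V) (s : ℕ) :
    (∃ c, IsPartialListColoring G (fun _ => Finset.Icc 1 s) S c) ↔ (G.induce S).Colorable s := by
  classical
  refine ⟨fun ⟨c, hc⟩ => by simpa using hc.colorable_induce, fun ⟨C⟩ => ?_⟩
  refine ⟨fun v => if hv : v ∈ S then C ⟨v, hv⟩ + 1 else 0, fun v hv => ?_, fun u hu w hw huw => ?_⟩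
  · have := (C ⟨v, hv⟩).2
    simp only [hv, dif_pos, Finset.mem_Icc]
    omega
  · simp only [hu, hw, dif_pos, ne_eq, add_left_inj]
    exact fun h => C.valid (show (G.induce S).Adj ⟨u, hu⟩ ⟨w, hw⟩ from huw) (Fin.ext h)

theorem card_le_lamL [Fintype V] {L : V → Finset ℕ} {S : Finset V} {c : V → ℕ}
    (hc : IsPartialListColoring G L S c) : S.card ≤ lamL G L :=
  le_csSup ⟨Fintype.card V, by rintro k ⟨T, -, rfl, -⟩; exact T.card_le_univ⟩ ⟨S, c, rfl, hc⟩

end PartialListColoring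

theorem chromaticNumber_of_max_partial_coloring_general {V : Type*} [Fintype V]
    (G : SimpleGraph V) (s : ℕ) (S : Finset V) (c : V → ℕ)
    (hc : IsPartialListColoring G (fun _ => Finset.Icc 1 s) (S : Set V) c)
    (hcard : S.card = lamL G (fun _ => Finset.Icc 1 s))
    (hlt : S.card < Fintype.card V) :
    (G.induce (S : Set V)).chromaticNumber = (s : ℕ∞) := by
  classical
  obtain ⟨v, -, hv⟩ := Finset.exists_mem_notMem_of_card_lt_card (t := Finset.univ) hlt
  refine le_antisymm (chromaticNumber_le_iff_colorable.mpr (by simpa using hc.colorable_induce))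
    (le_chromaticNumber_iff_colorable.mpr fun n hn => ?_)
  by_contra! hns
  obtain ⟨c', hc'⟩ := (exists_isPartialListColoring_Icc_iff_colorable _ s).mpr
    ((hn.induce_insert v).mono hns)
  have hle := card_le_lamL (S := insert v S) (by simpa using hc')
  rw [Finset.card_insert_of_notMem hv, ← hcard] at hle
  omega

theorem chromaticNumber_of_max_partial_coloring {V : Type*} [Fintype V]
    (G : SimpleGraph V) (s : ℕ) (hs : 1 ≤ s) (S : Finset V) (c : V → ℕ)
    (hc : IsPartialListColoring G (fun _ => Finset.Icc 1 s) (S : Set V) c)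
    (hcard : S.card = lamL G (fun _ => Finset.Icc 1 s))
    (hlt : S.card < Fintype.card V) :
    (G.induce (S : Set V)).chromaticNumber = (s : ℕ∞) :=
  chromaticNumber_of_max_partial_coloring_general G s S c hc hcard hlt
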